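/- arXiv:1310.0966 — 2 statements merged into one kernel-verified Lean document; each statement's English description precedes it below -/
import Mathlib

section
/- Corollary 1 (one extreme point): Let N ≥ 1, let q : Fin N → ℝ be priors with q antitone, and let v : Fin N → EuclideanSpace ℝ (Fin 3) with ‖v i‖ ≤ 1. If q i • v i = q j • v j for all i, j (the polytope P{q i • v i} is a single point), then q 0 is the greatest element of the set of success probabilities {P(M) : M an N-outcome POVM}; i.e., every POVM satisfies P(M) ≤ q 0 and this value is attained (by the POVM with M 0 = 1 and M i = 0 for i ≠ 0). -/
open Matrix Complex Finset RealInnerProductSpace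
open scoped ComplexOrder

/-!
Write `ρ(v) = (1 + v·σ)/2`, so `Re tr(ρ(v) M) = (Re tr M + Re tr((v·σ) M))/2`. Since `v ↦ v·σ` is
linear, the Bloch parts of `P(M)` are `Re tr((q i • v i)·σ M i)`; when all `q i • v i` equal one
vector `c` they add up to `Re tr((c·σ) ∑ M i) = Re tr(c·σ) = 0`, as the Pauli matrices are
traceless. What remains is `∑ q i Re tr(M i) / 2 ≤ q 0 · tr 1 / 2 = q 0`, because `q` is largest
at `0` and the `M i` are positive semidefinite with `∑ M i = 1`. The POVM `M 0 = 1` attains it.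
-/

/-- The first Pauli matrix. -/
noncomputable def pauli1 : Matrix (Fin 2) (Fin 2) ℂ := !![0, 1; 1, 0]

/-- The second Pauli matrix. -/
noncomputable def pauli2 : Matrix (Fin 2) (Fin 2) ℂ := !![0, -Complex.I; Complex.I, 0]

/-- The third Pauli matrix. -/
noncomputable def pauli3 : Matrix (Fin 2) (Fin 2) ℂ := !![1, 0; 0, -1]

/-- The operator `v ⬝ σ` for a Bloch vector `v`. -/
noncomputable def blochOp (v : EuclideanSpace ℝ (Fin 3)) : Matrix (Fin 2) (Fin 2) ℂ :=
  (v 0 : ℂ) • pauli1 + (v 1 : ℂ) • pauli2 + (v 2 : ℂ) • pauli3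

/-- The qubit state with Bloch vector `v`. -/
noncomputable def qubitState (v : EuclideanSpace ℝ (Fin 3)) : Matrix (Fin 2) (Fin 2) ℂ :=
  (1 / 2 : ℂ) • (1 + blochOp v)

/-- An `N`-outcome POVM on `ℂ^d`. -/
def IsPOVM {N d : ℕ} (M : Fin N → Matrix (Fin d) (Fin d) ℂ) : Prop :=
  (∀ i, (M i).PosSemidef) ∧ ∑ i, M i = 1

/-- Priors: a probability distribution. -/
def IsPriors {N : ℕ} (q : Fin N → ℝ) : Prop :=
  (∀ i, 0 ≤ q i) ∧ ∑ i, q i = 1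

/-- Success probability of the POVM `M` for qubit states with Bloch vectors `v`
and priors `q`. -/
noncomputable def succProb {N : ℕ} (q : Fin N → ℝ) (v : Fin N → EuclideanSpace ℝ (Fin 3))
    (M : Fin N → Matrix (Fin 2) (Fin 2) ℂ) : ℝ :=
  ∑ i, q i * (Matrix.trace (qubitState (v i) * M i)).re

/-- The geometric KKT conditions for `(q, v)` satisfied by `(r, w)`. -/
def GeomKKT {N : ℕ} (q : Fin N → ℝ) (v : Fin N → EuclideanSpace ℝ (Fin 3))
    (r : Fin N → ℝ) (w : Fin N → EuclideanSpace ℝ (Fin 3)) : Prop :=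
  (∀ i j, r i • w i - r j • w j = q j • v j - q i • v i) ∧
  (∃ p : Fin N → ℝ, (∀ i, 0 < p i) ∧ (∑ i, p i = 1) ∧ (∑ i, p i • w i = 0)) ∧
  (∀ i, ‖w i‖ = 1) ∧
  (∀ i j, r i - r j = q j - q i)


section POVM

variable {N d : ℕ} {M : Fin N → Matrix (Fin d) (Fin d) ℂ}

lemma IsPOVM.sum_re_trace (hM : IsPOVM M) : ∑ i, (M i).trace.re = d := by
  rw [← Complex.re_sum, ← Matrix.trace_sum, hM.2, Matrix.trace_one]
  simp

lemma IsPOVM.sum_mul_re_trace_le (hM : IsPOVM M) {q : Fin N → ℝ} {b : ℝ} (hb : ∀ i, q i ≤ b) :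
    ∑ i, q i * (M i).trace.re ≤ b * d := by
  have htr (i : Fin N) : 0 ≤ (M i).trace.re := (Complex.le_def.mp (hM.1 i).trace_nonneg).1
  calc ∑ i, q i * (M i).trace.re
      ≤ ∑ i, b * (M i).trace.re := sum_le_sum fun i _ => mul_le_mul_of_nonneg_right (hb i) (htr i)
    _ = b * d := by rw [← mul_sum, hM.sum_re_trace]

lemma isPOVM_single (k : Fin N) :
    IsPOVM (fun i : Fin N => if i = k then (1 : Matrix (Fin d) (Fin d) ℂ) else 0) := by
  refine ⟨fun i => ?_, by simp⟩
  dsimp only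
  split_ifs
  · exact .one
  · exact .zero

end POVM

section Qubit

lemma blochOp_smul (c : ℝ) (v : EuclideanSpace ℝ (Fin 3)) :
    blochOp (c • v) = (c : ℂ) • blochOp v := by
  simp only [blochOp, PiLp.smul_apply, smul_eq_mul, Complex.ofReal_mul, smul_add, smul_smul]

lemma trace_blochOp (v : EuclideanSpace ℝ (Fin 3)) : (blochOp v).trace = 0 := by
  simp [blochOp, pauli1, pauli2, pauli3, Matrix.trace_fin_two]

lemma trace_qubitState (v : EuclideanSpace ℝ (Fin 3)) : (qubitState v).trace = 1 := by
  simp [qubitState, Matrix.trace_add, trace_blochOp]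

lemma re_trace_qubitState_mul (v : EuclideanSpace ℝ (Fin 3)) (M : Matrix (Fin 2) (Fin 2) ℂ) :
    (qubitState v * M).trace.re = (M.trace.re + (blochOp v * M).trace.re) / 2 := by
  simp only [qubitState, one_div, smul_add, add_mul, Algebra.smul_mul_assoc, one_mul, trace_add,
    trace_smul, smul_eq_mul, add_re, mul_re, inv_re, re_ofNat, normSq_ofNat, div_self_mul_self',
    inv_im, im_ofNat, neg_zero, zero_div, zero_mul, sub_zero]
  ring

variable {N : ℕ} (q : Fin N → ℝ) (v : Fin N → EuclideanSpace ℝ (Fin 3))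

lemma succProb_eq (M : Fin N → Matrix (Fin 2) (Fin 2) ℂ) :
    succProb q v M =
      (∑ i, q i * (M i).trace.re + ∑ i, (blochOp (q i • v i) * M i).trace.re) / 2 := by
  simp only [succProb, re_trace_qubitState_mul, blochOp_smul, smul_mul_assoc, Matrix.trace_smul,
    smul_eq_mul, re_ofReal_mul, sum_div, ← sum_add_distrib]
  exact sum_congr rfl fun i _ => by ring

lemma succProb_single (k : Fin N) :
    succProb q v (fun i => if i = k then 1 else 0) = q k := by
  rw [succProb, sum_eq_single k (fun i _ hi => by simp [hi]) (by simp)]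
  simp [trace_qubitState]

lemma succProb_le_of_smul_eq {M : Fin N → Matrix (Fin 2) (Fin 2) ℂ} (hM : IsPOVM M)
    {c : EuclideanSpace ℝ (Fin 3)} (hc : ∀ i, q i • v i = c) {b : ℝ} (hb : ∀ i, q i ≤ b) :
    succProb q v M ≤ b := by
  have hbloch : ∑ i, (blochOp (q i • v i) * M i).trace.re = 0 := by
    simp only [hc, ← Complex.re_sum, ← Matrix.trace_sum, ← mul_sum, hM.2, mul_one, trace_blochOp,
      zero_re]
  have hdiag := hM.sum_mul_re_trace_le hb
  rw [succProb_eq, hbloch]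
  push_cast at hdiag
  linarith

end Qubit

theorem corollary_one_extreme_point_general (N : ℕ) (hN : 0 < N)
    (q : Fin N → ℝ) (hqa : Antitone q)
    (v : Fin N → EuclideanSpace ℝ (Fin 3))
    (hpt : ∀ i j, q i • v i = q j • v j) :
    IsGreatest {x | ∃ M : Fin N → Matrix (Fin 2) (Fin 2) ℂ, IsPOVM M ∧ succProb q v M = x}
      (q ⟨0, hN⟩) ∧
    IsPOVM (fun i : Fin N => if i = ⟨0, hN⟩ then (1 : Matrix (Fin 2) (Fin 2) ℂ) else 0) ∧
    succProb q v (fun i : Fin N => if i = ⟨0, hN⟩ then (1 : Matrix (Fin 2) (Fin 2) ℂ) else 0)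
      = q ⟨0, hN⟩ := by
  refine ⟨⟨⟨_, isPOVM_single _, succProb_single q v _⟩, ?_⟩, isPOVM_single _,
    succProb_single q v _⟩
  rintro x ⟨M, hM, rfl⟩
  exact succProb_le_of_smul_eq q v hM (fun i => hpt i ⟨0, hN⟩)
    fun i => hqa (Nat.zero_le i.val)

/-- Corollary 1 (one extreme point): if all points `q i • v i` coincide, the
guessing probability is `q 0`, attained by `M 0 = 1`, `M i = 0` otherwise. -/
theorem corollary_one_extreme_point (N : ℕ) (hN : 0 < N)
    (q : Fin N → ℝ) (hq : IsPriors q) (hqa : Antitone q)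
    (v : Fin N → EuclideanSpace ℝ (Fin 3)) (hv : ∀ i, ‖v i‖ ≤ 1)
    (hpt : ∀ i j, q i • v i = q j • v j) :
    IsGreatest {x | ∃ M : Fin N → Matrix (Fin 2) (Fin 2) ℂ, IsPOVM M ∧ succProb q v M = x}
      (q ⟨0, hN⟩) ∧
    IsPOVM (fun i : Fin N => if i = ⟨0, hN⟩ then (1 : Matrix (Fin 2) (Fin 2) ℂ) else 0) ∧
    succProb q v (fun i : Fin N => if i = ⟨0, hN⟩ then (1 : Matrix (Fin 2) (Fin 2) ℂ) else 0)
      = q ⟨0, hN⟩ :=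
  corollary_one_extreme_point_general N hN q hqa v hpt
end

section
/- Two-state discrimination, degenerate case: Let q : Fin 2 → ℝ be priors with q 0 ≥ q 1, and let v : Fin 2 → EuclideanSpace ℝ (Fin 3) with ‖v i‖ ≤ 1. If ‖q 0 • v 0 − q 1 • v 1‖ ≤ q 0 − q 1, then q 0 is the greatest element of the set of success probabilities {P(M) : M a 2-outcome POVM}; i.e., every 2-outcome POVM satisfies P(M) ≤ q 0 and this value is attained (by M 0 = 1, M 1 = 0). -/
open Matrix Complex Finset RealInnerProductSpace
open scoped ComplexOrder

/-!
Since `M 0 = 1 - M 1`, the deficit `q 0 - P(M)` equals `Re tr(X * M 1)` for the Helstrom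
operator `X = q 0 • ρ(v 0) - q 1 • ρ(v 1) = ½ ((q 0 - q 1) • 1 + u ⬝ σ)`, where
`u = q 0 • v 0 - q 1 • v 1`. As `(u ⬝ σ)² = ‖u‖² • 1`, the hypothesis `‖u‖ ≤ q 0 - q 1` makes `X`
positive semidefinite, and the trace of a product of positive semidefinite matrices is
nonnegative.
-/

namespace Matrix

variable {n : Type*} [Fintype n] [DecidableEq n]

lemma PosSemidef.trace_mul_nonneg {A B : Matrix n n ℂ} (hA : A.PosSemidef) (hB : B.PosSemidef) :
    0 ≤ (A * B).trace := by
  open scoped MatrixOrder in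
  obtain ⟨C, rfl⟩ := CStarAlgebra.nonneg_iff_eq_star_mul_self.mp hB.nonneg
  rw [← Matrix.mul_assoc, Matrix.trace_mul_cycle]
  exact (hA.mul_mul_conjTranspose_same C).trace_nonneg

lemma IsHermitian.posSemidef_smul_one_add {A : Matrix n n ℂ} (hA : A.IsHermitian) {a r : ℝ}
    (hAA : A * A = ((r ^ 2 : ℝ) : ℂ) • 1) (hr : 0 ≤ r) (hra : r ≤ a) :
    ((a : ℂ) • 1 + A).PosSemidef := by
  rcases (hr.trans hra).eq_or_lt with rfl | ha
  · obtain rfl : r = 0 := le_antisymm hra hr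
    obtain rfl : A = 0 := by
      rw [← conjTranspose_mul_self_eq_zero, hA.eq, hAA]
      simp
    simpa using PosSemidef.zero
  set S := (a : ℂ) • 1 + A
  -- `2a S = Sᴴ S + (a² - r²)` exhibits `S` as a sum of positive terms.
  have hS : ((2 * a : ℝ) : ℂ) • S = Sᴴ * S + ((a ^ 2 - r ^ 2 : ℝ) : ℂ) • 1 := by
    simp only [S, conjTranspose_add, conjTranspose_smul, conjTranspose_one, hA.eq, add_mul,
      mul_add, smul_mul_assoc, mul_smul_comm, hAA, Matrix.one_mul, Matrix.mul_one,
      Complex.star_def, Complex.conj_ofReal]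
    push_cast
    module
  have h2a : ((2 * a : ℝ) : ℂ) ≠ 0 := by exact_mod_cast (by positivity : 2 * a ≠ 0)
  rw [← inv_smul_smul₀ h2a S, hS, ← Complex.ofReal_inv]
  refine ((posSemidef_conjTranspose_mul_self S).add (PosSemidef.one.smul ?_)).smul ?_
  · exact_mod_cast (by nlinarith : 0 ≤ a ^ 2 - r ^ 2)
  · exact_mod_cast (by positivity : 0 ≤ (2 * a)⁻¹)

end Matrix

lemma blochOp_isHermitian (u : EuclideanSpace ℝ (Fin 3)) : (blochOp u).IsHermitian := by
  ext i j
  fin_cases i <;> fin_cases j <;> simp [blochOp, pauli1, pauli2, pauli3]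

lemma blochOp_mul_self (u : EuclideanSpace ℝ (Fin 3)) :
    blochOp u * blochOp u = ((‖u‖ ^ 2 : ℝ) : ℂ) • 1 := by
  rw [EuclideanSpace.real_norm_sq_eq, Fin.sum_univ_three]
  ext i j
  fin_cases i <;> fin_cases j <;>
    simp only [blochOp, pauli1, pauli2, pauli3, smul_of, smul_cons, smul_eq_mul, mul_zero, mul_one,
      Matrix.smul_empty, mul_neg, of_add_of, add_cons, head_cons, add_zero, tail_cons,
      empty_add_empty, zero_add, Matrix.mul_apply, of_apply, cons_val', cons_val_fin_one, cons_val_zero,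
      cons_val_one, Fin.sum_univ_two, ofReal_add, ofReal_pow, Matrix.smul_apply, one_apply_eq,
      one_apply_ne zero_ne_one, one_apply_ne one_ne_zero, neg_mul, neg_neg, Fin.isValue,
      Fin.zero_eta, Fin.mk_one]
  · linear_combination (-(u 1 : ℂ) ^ 2) * Complex.I_sq
  · ring
  · ring
  · linear_combination (-(u 1 : ℂ) ^ 2) * Complex.I_sq

lemma blochOp_smul_sub_smul (a b : ℝ) (x y : EuclideanSpace ℝ (Fin 3)) :
    blochOp (a • x - b • y) = (a : ℂ) • blochOp x - (b : ℂ) • blochOp y := by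
  simp only [blochOp, PiLp.sub_apply, PiLp.smul_apply, smul_eq_mul]
  push_cast
  module

lemma posSemidef_smul_one_add_blochOp {a : ℝ} {u : EuclideanSpace ℝ (Fin 3)} (h : ‖u‖ ≤ a) :
    ((a : ℂ) • 1 + blochOp u).PosSemidef :=
  (blochOp_isHermitian u).posSemidef_smul_one_add (blochOp_mul_self u) (norm_nonneg u) h

lemma smul_qubitState_sub_smul_qubitState (a b : ℝ) (x y : EuclideanSpace ℝ (Fin 3)) :
    (a : ℂ) • qubitState x - (b : ℂ) • qubitState y =
      (1 / 2 : ℂ) • (((a - b : ℝ) : ℂ) • 1 + blochOp (a • x - b • y)) := by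
  rw [blochOp_smul_sub_smul, qubitState, qubitState]
  push_cast
  module

lemma posSemidef_smul_qubitState_sub_smul_qubitState {a b : ℝ} {x y : EuclideanSpace ℝ (Fin 3)}
    (h : ‖a • x - b • y‖ ≤ a - b) :
    ((a : ℂ) • qubitState x - (b : ℂ) • qubitState y).PosSemidef := by
  rw [smul_qubitState_sub_smul_qubitState]
  exact (posSemidef_smul_one_add_blochOp h).smul one_half_pos.le

lemma succProb_eq_sub_of_add_eq_one (q : Fin 2 → ℝ) (v : Fin 2 → EuclideanSpace ℝ (Fin 3))
    {M : Fin 2 → Matrix (Fin 2) (Fin 2) ℂ} (hM : M 0 + M 1 = 1) :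
    succProb q v M = q 0 -
      (((q 0 : ℂ) • qubitState (v 0) - (q 1 : ℂ) • qubitState (v 1)) * M 1).trace.re := by
  rw [← eq_sub_iff_add_eq] at hM
  simp only [succProb, Fin.sum_univ_two, hM, Matrix.mul_sub, Matrix.sub_mul, mul_one, trace_sub,
    trace_smul, trace_qubitState, smul_mul_assoc, sub_re, one_re, Complex.coe_smul, real_smul,
    mul_re, ofReal_re, ofReal_im, zero_mul, sub_zero]
  ring

lemma isPOVM_one_zero {d : ℕ} : IsPOVM ![(1 : Matrix (Fin d) (Fin d) ℂ), 0] :=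
  ⟨Fin.forall_fin_two.mpr ⟨PosSemidef.one, PosSemidef.zero⟩, by simp⟩

lemma succProb_one_zero (q : Fin 2 → ℝ) (v : Fin 2 → EuclideanSpace ℝ (Fin 3)) :
    succProb q v ![1, 0] = q 0 := by
  simp [succProb, trace_qubitState]

theorem two_state_degenerate_general
    (q : Fin 2 → ℝ)
    (v : Fin 2 → EuclideanSpace ℝ (Fin 3))
    (hdeg : ‖q 0 • v 0 - q 1 • v 1‖ ≤ q 0 - q 1) :
    IsGreatest {x | ∃ M : Fin 2 → Matrix (Fin 2) (Fin 2) ℂ, IsPOVM M ∧ succProb q v M = x}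
      (q 0) ∧
    IsPOVM ![(1 : Matrix (Fin 2) (Fin 2) ℂ), 0] ∧
    succProb q v ![(1 : Matrix (Fin 2) (Fin 2) ℂ), 0] = q 0 := by
  refine ⟨⟨⟨_, isPOVM_one_zero, succProb_one_zero q v⟩, ?_⟩, isPOVM_one_zero,
    succProb_one_zero q v⟩
  rintro _ ⟨M, hM, rfl⟩
  rw [succProb_eq_sub_of_add_eq_one q v (by simpa [Fin.sum_univ_two] using hM.2)]
  have := (posSemidef_smul_qubitState_sub_smul_qubitState hdeg).trace_mul_nonneg (hM.1 1)
  linarith [(Complex.nonneg_iff.mp this).1]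

/-- Two-state discrimination, degenerate case: if
`‖q 0 • v 0 - q 1 • v 1‖ ≤ q 0 - q 1`, the guessing probability is `q 0`,
attained by `M 0 = 1`, `M 1 = 0`. -/
theorem two_state_degenerate
    (q : Fin 2 → ℝ) (hq : IsPriors q) (hq01 : q 1 ≤ q 0)
    (v : Fin 2 → EuclideanSpace ℝ (Fin 3)) (hv : ∀ i, ‖v i‖ ≤ 1)
    (hdeg : ‖q 0 • v 0 - q 1 • v 1‖ ≤ q 0 - q 1) :
    IsGreatest {x | ∃ M : Fin 2 → Matrix (Fin 2) (Fin 2) ℂ, IsPOVM M ∧ succProb q v M = x}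
      (q 0) ∧
    IsPOVM ![(1 : Matrix (Fin 2) (Fin 2) ℂ), 0] ∧
    succProb q v ![(1 : Matrix (Fin 2) (Fin 2) ℂ), 0] = q 0 :=
  two_state_degenerate_general q v hdeg
end
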